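/- For any simple hypergraph H, α₀'(H) = d'_H, i.e., the maximum cardinality of a minimal vertex cover of H equals the maximum of |E(B)| over all semi-strongly disjoint sets of bouquets B of H. -/

import Mathlib

/-!
Every vertex `v` of a minimal vertex cover `C` has a private edge, meeting `C` only in `v`;
these edges, as one-edge bouquets flowered at their vertex of `C`, form a semi-strongly
disjoint family with `|C|` edges. Conversely, if `𝓑` is semi-strongly disjoint, the complement
of the independent set `V(𝓑) \ F(𝓑)` is a cover, and a minimal cover inside it meets each edge
of `𝓑` only in that edge's own flower, so distinct edges of `𝓑` meet it in distinct vertices.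
-/

open Finset

structure SimpleHypergraph (α : Type*) [DecidableEq α] where
  edges : Finset (Finset α)
  nonempty_edges : ∀ E ∈ edges, E.Nonempty
  antichain : ∀ E ∈ edges, ∀ F ∈ edges, E ⊆ F → E = F

namespace SimpleHypergraph

variable {α : Type*} [DecidableEq α]

/-- The vertex set of a simple hypergraph: the union of its edges. -/
def verts (H : SimpleHypergraph α) : Finset α := H.edges.sup id

/-- `C` is a vertex cover: every edge meets `C`. -/
def IsCover (H : SimpleHypergraph α) (C : Finset α) : Prop :=
  ∀ E ∈ H.edges, ∃ v ∈ E, v ∈ C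

/-- `C` is a minimal vertex cover. -/
def IsMinCover (H : SimpleHypergraph α) (C : Finset α) : Prop :=
  H.IsCover C ∧ ∀ D ⊂ C, ¬ H.IsCover D

/-- `A` is independent: it contains no edge. -/
def Indep (H : SimpleHypergraph α) (A : Finset α) : Prop :=
  ∀ E ∈ H.edges, ¬ E ⊆ A

/-- The partial hypergraph of `H` on a vertex subset `U`. -/
def restrict (H : SimpleHypergraph α) (U : Finset α) : SimpleHypergraph α where
  edges := H.edges.filter (· ⊆ U)
  nonempty_edges := fun E hE => H.nonempty_edges E (Finset.mem_filter.mp hE).1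
  antichain := fun E hE F hF h =>
    H.antichain E (Finset.mem_filter.mp hE).1 F (Finset.mem_filter.mp hF).1 h

/-- The maximum cardinality of a minimal vertex cover (big height). -/
noncomputable def alpha0' (H : SimpleHypergraph α) : ℕ :=
  sSup {n : ℕ | ∃ C : Finset α, H.IsMinCover C ∧ n = C.card}

/-- A bouquet of `H`: a partial hypergraph whose edges have a common vertex,
with a designated flower in each edge belonging to no other edge. -/
structure BouquetOf (H : SimpleHypergraph α) where
  edges : Finset (Finset α)
  edges_nonempty : edges.Nonempty
  subset : edges ⊆ H.edges
  core : ∃ v, ∀ E ∈ edges, v ∈ E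
  flower : Finset α → α
  flower_spec : ∀ E ∈ edges, ∀ F ∈ edges, (flower E ∈ F ↔ E = F)

def BouquetOf.flowers {H : SimpleHypergraph α} (B : H.BouquetOf) : Finset α :=
  B.edges.image B.flower

def BouquetOf.verts {H : SimpleHypergraph α} (B : H.BouquetOf) : Finset α :=
  B.edges.sup id

/-- The union of the edge sets of a finite family of bouquets. -/
def famEdges {H : SimpleHypergraph α} {j : ℕ} (B : Fin j → H.BouquetOf) :
    Finset (Finset α) := Finset.univ.sup fun i => (B i).edges

/-- The union of the flower sets of a finite family of bouquets. -/
def famFlowers {H : SimpleHypergraph α} {j : ℕ} (B : Fin j → H.BouquetOf) :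
    Finset α := Finset.univ.sup fun i => (B i).flowers

/-- The union of the vertex sets of a finite family of bouquets. -/
def famVerts {H : SimpleHypergraph α} {j : ℕ} (B : Fin j → H.BouquetOf) :
    Finset α := Finset.univ.sup fun i => (B i).verts

/-- A semi-strongly disjoint family of bouquets of `H`. -/
def SSD (H : SimpleHypergraph α) {j : ℕ} (B : Fin j → H.BouquetOf) : Prop :=
  (∀ p q : Fin j, p ≠ q → ∀ E ∈ (B p).edges, ∀ f ∈ (B q).flowers, f ∉ E) ∧
  H.Indep (famVerts B \ famFlowers B)

/-- `d'_H`: the maximum of `|E(𝓑)|` over semi-strongly disjoint sets of bouquets. -/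
noncomputable def dPrime (H : SimpleHypergraph α) : ℕ :=
  sSup {n : ℕ | ∃ (j : ℕ) (B : Fin j → H.BouquetOf), H.SSD B ∧ n = (famEdges B).card}

end SimpleHypergraph

namespace SimpleHypergraph

variable {α : Type*} [DecidableEq α] {H : SimpleHypergraph α}

theorem mem_verts {v : α} : v ∈ H.verts ↔ ∃ E ∈ H.edges, v ∈ E := by
  simp [verts]

theorem IsCover.exists_isMinCover_subset {D : Finset α} (hD : H.IsCover D) :
    ∃ C ⊆ D, H.IsMinCover C := by
  induction D using Finset.strongInduction with
  | H D ih =>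
    by_cases hmin : ∀ D' ⊂ D, ¬ H.IsCover D'
    · exact ⟨D, subset_rfl, hD, hmin⟩
    · push Not at hmin
      obtain ⟨D', hD'D, hD'⟩ := hmin
      obtain ⟨C, hCD', hC⟩ := ih D' hD'D hD'
      exact ⟨C, hCD'.trans hD'D.subset, hC⟩

theorem Indep.isCover_verts_sdiff {S : Finset α} (hS : H.Indep S) :
    H.IsCover (H.verts \ S) := by
  intro E hE
  by_contra! hES
  exact hS E hE fun v hv => by
    simpa [mem_verts.2 ⟨E, hE, hv⟩] using hES v hv

theorem IsCover.indep_sdiff {C : Finset α} (hC : H.IsCover C) (A : Finset α) :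
    H.Indep (A \ C) := fun E hE hEA =>
  (hC E hE).elim fun _ ⟨hv, hvC⟩ => (mem_sdiff.1 (hEA hv)).2 hvC

theorem IsMinCover.exists_private_edge {C : Finset α} (hC : H.IsMinCover C) {v : α}
    (hv : v ∈ C) : ∃ E ∈ H.edges, v ∈ E ∧ ∀ w ∈ C, w ∈ E → w = v := by
  have hnot : ¬ H.IsCover (C.erase v) := hC.2 _ (erase_ssubset hv)
  simp only [IsCover, mem_erase, not_forall, not_exists, not_and] at hnot
  obtain ⟨E, hE, hEC⟩ := hnot
  have hprivate : ∀ w ∈ C, w ∈ E → w = v := fun w hwC hwE => by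
    by_contra hwv
    exact hEC w hwE hwv hwC
  obtain ⟨w, hwE, hwC⟩ := hC.1 E hE
  exact ⟨E, hE, hprivate w hwC hwE ▸ hwE, hprivate⟩

theorem mem_famEdges {j : ℕ} {B : Fin j → H.BouquetOf} {E : Finset α} :
    E ∈ famEdges B ↔ ∃ i, E ∈ (B i).edges := by
  simp [famEdges]

theorem mem_famFlowers {j : ℕ} {B : Fin j → H.BouquetOf} {w : α} :
    w ∈ famFlowers B ↔ ∃ i, ∃ E ∈ (B i).edges, (B i).flower E = w := by
  simp [famFlowers, BouquetOf.flowers]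

theorem mem_famVerts {j : ℕ} {B : Fin j → H.BouquetOf} {w : α} :
    w ∈ famVerts B ↔ ∃ i, ∃ E ∈ (B i).edges, w ∈ E := by
  simp [famVerts, BouquetOf.verts]

def BouquetOf.single {E : Finset α} (hE : E ∈ H.edges) {v : α} (hv : v ∈ E) :
    H.BouquetOf where
  edges := {E}
  edges_nonempty := singleton_nonempty E
  subset := singleton_subset_iff.2 hE
  core := ⟨v, fun F hF => mem_singleton.1 hF ▸ hv⟩
  flower _ := v
  flower_spec F hF G hG := by
    rw [mem_singleton.1 hF, mem_singleton.1 hG]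
    exact iff_of_true hv rfl

@[simp]
theorem BouquetOf.single_edges {E : Finset α} (hE : E ∈ H.edges) {v : α} (hv : v ∈ E) :
    (BouquetOf.single hE hv).edges = {E} := rfl

@[simp]
theorem BouquetOf.single_flower {E : Finset α} (hE : E ∈ H.edges) {v : α} (hv : v ∈ E)
    (F : Finset α) : (BouquetOf.single hE hv).flower F = v := rfl

theorem IsMinCover.exists_ssd_card_le {C : Finset α} (hC : H.IsMinCover C) :
    ∃ (j : ℕ) (B : Fin j → H.BouquetOf), H.SSD B ∧ C.card ≤ (famEdges B).card := by
  choose! P hP hvP hPC using fun v (hv : v ∈ C) => hC.exists_private_edge hv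
  let e := C.equivFin.symm
  let B : Fin C.card → H.BouquetOf := fun i => .single (hP _ (e i).2) (hvP _ (e i).2)
  have hflowers : famFlowers B = C := by
    ext w
    simp only [mem_famFlowers, B, BouquetOf.single_edges, BouquetOf.single_flower,
      mem_singleton, exists_eq_left]
    exact ⟨fun ⟨i, hi⟩ => hi ▸ (e i).2, fun hw => ⟨e.symm ⟨w, hw⟩, by simp⟩⟩
  have hssd : H.SSD B := by
    refine ⟨fun p q hpq E hE f hf hfE => hpq ?_, by rw [hflowers]; exact hC.1.indep_sdiff _⟩
    simp only [B, BouquetOf.flowers, BouquetOf.single_edges, BouquetOf.single_flower,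
      image_singleton, mem_singleton] at hE hf
    subst hE hf
    exact e.injective (Subtype.ext (hPC _ (e p).2 _ (e q).2 hfE)).symm
  refine ⟨C.card, B, hssd, card_le_card_of_forall_subsingleton (· ∈ ·) (fun v hv => ?_) ?_⟩
  · refine ⟨P v, mem_famEdges.2 ⟨e.symm ⟨v, hv⟩, ?_⟩, hvP v hv⟩
    simp [B]
  · intro E hE v ⟨hvC, hvE⟩ w ⟨hwC, hwE⟩
    obtain ⟨i, hi⟩ := mem_famEdges.1 hE
    simp only [B, BouquetOf.single_edges, mem_singleton] at hi
    subst hi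
    exact (hPC _ (e i).2 v hvC hvE).trans (hPC _ (e i).2 w hwC hwE).symm

theorem SSD.eq_of_flower_mem {j : ℕ} {B : Fin j → H.BouquetOf} (hB : H.SSD B) {p q : Fin j}
    {E F : Finset α} (hE : E ∈ (B p).edges) (hF : F ∈ (B q).edges) (hFE : (B q).flower F ∈ E) :
    F = E := by
  by_cases hpq : p = q
  · subst hpq
    exact ((B p).flower_spec F hF E hE).1 hFE
  · exact absurd hFE (hB.1 p q hpq E hE _ (mem_image_of_mem _ hF))

theorem SSD.exists_isMinCover_card_le {j : ℕ} {B : Fin j → H.BouquetOf} (hB : H.SSD B) :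
    ∃ C, H.IsMinCover C ∧ (famEdges B).card ≤ C.card := by
  obtain ⟨C, hCS, hC⟩ := hB.2.isCover_verts_sdiff.exists_isMinCover_subset
  refine ⟨C, hC, card_le_card_of_forall_subsingleton (fun E w => w ∈ E) (fun E hE => ?_) ?_⟩
  · obtain ⟨i, hi⟩ := mem_famEdges.1 hE
    obtain ⟨w, hwE, hwC⟩ := hC.1 E ((B i).subset hi)
    exact ⟨w, hwC, hwE⟩
  · intro w hwC E ⟨hE, hwE⟩ E' ⟨hE', hwE'⟩
    obtain ⟨p, hp⟩ := mem_famEdges.1 hE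
    obtain ⟨p', hp'⟩ := mem_famEdges.1 hE'
    have hwF : w ∈ famFlowers B := by
      have := hCS hwC
      simp only [mem_sdiff, not_and, not_not] at this
      exact this.2 (mem_famVerts.2 ⟨p, E, hp, hwE⟩)
    obtain ⟨q, F, hF, rfl⟩ := mem_famFlowers.1 hwF
    exact (hB.eq_of_flower_mem hp hF hwE).symm.trans (hB.eq_of_flower_mem hp' hF hwE')

end SimpleHypergraph

open SimpleHypergraph in
/-- `α₀'(H) = d'_H`. -/
theorem stmt7 {α : Type*} [DecidableEq α] (H : SimpleHypergraph α) :
    H.alpha0' = H.dPrime := by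
  refine csSup_eq_csSup_of_forall_exists_le ?_ ?_
  · rintro _ ⟨C, hC, rfl⟩
    obtain ⟨j, B, hB, hle⟩ := hC.exists_ssd_card_le
    exact ⟨_, ⟨j, B, hB, rfl⟩, hle⟩
  · rintro _ ⟨j, B, hB, rfl⟩
    obtain ⟨C, hC, hle⟩ := hB.exists_isMinCover_card_le
    exact ⟨_, ⟨C, hC, rfl⟩, hle⟩
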